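/- Let p > 2, Λ > 0, and define the Talenti bubbles V_t(s) := β·(cosh(α(s−t)))^{−2/(p−2)} with α := ((p−2)/2)·√Λ and β := (pΛ/2)^{1/(p−2)}. There exist constants c > 0, C > 0 and M > 0, depending only on p and Λ, such that whenever t₁, t₂ ∈ ℝ satisfy t₂ − t₁ ≥ M, one has c·e^{√Λ·(t₁−t₂)} ≤ ∫_ℝ V_{t₁}(s)^{p−1}·V_{t₂}'(s) ds ≤ C·e^{√Λ·(t₁−t₂)}. -/

import Mathlib

/-!
Write `q = 2 / (p - 2)`, so that `V_t = β cosh (α (· - t)) ^ (-q)` and `q α = √Λ`. After the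
shift `u = s - t₁` the integral is a positive multiple of
`I(d) = ∫ cosh (α u) ^ (-q (p - 1)) cosh (α (d - u)) ^ (-q - 1) sinh (α (d - u)) du`,
where `d = t₂ - t₁`. The kernel `e^{q y} cosh y ^ (-q - 1) sinh y` is bounded by `2 ^ q` and
tends to `2 ^ q` as `y → ∞`, so by dominated convergence
`e^{q α d} I(d) → 2 ^ q ∫ cosh (α u) ^ (-q (p - 1)) e^{q α u} du`,
which is finite and positive because `q (p - 1) > q`. For large `d`, `e^{q α d} I(d)` lies
within a factor `2` of this limit.
-/

open Real Set Filter Topology MeasureTheory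

lemma exp_abs_div_two_le_cosh (x : ℝ) : exp |x| / 2 ≤ cosh x := by
  rw [← cosh_abs, cosh_eq]
  linarith [exp_pos (-|x|)]

lemma cosh_rpow_neg_le {r : ℝ} (hr : 0 ≤ r) (x : ℝ) :
    cosh x ^ (-r) ≤ 2 ^ r * exp (-(r * |x|)) := by
  calc cosh x ^ (-r) ≤ (exp |x| / 2) ^ (-r) :=
        rpow_le_rpow_of_nonpos (by positivity) (exp_abs_div_two_le_cosh x) (by linarith)
    _ = 2 ^ r * exp (-(r * |x|)) := by
        rw [div_rpow (exp_pos _).le zero_le_two, ← exp_mul, rpow_neg zero_le_two]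
        field_simp

lemma integrable_exp_neg_mul_abs {a : ℝ} (ha : 0 < a) :
    Integrable fun u : ℝ => exp (-(a * |u|)) := by
  rw [← integrableOn_univ, ← Iic_union_Ioi (a := 0)]
  refine IntegrableOn.union ?_ ?_
  · refine (integrableOn_exp_mul_Iic ha 0).congr_fun (fun u hu => ?_) measurableSet_Iic
    rw [abs_of_nonpos hu]; ring_nf
  · refine (integrableOn_exp_mul_Ioi (neg_lt_zero.2 ha) 0).congr_fun (fun u hu => ?_)
      measurableSet_Ioi
    rw [abs_of_pos hu]; ring_nf

lemma exp_mul_cosh_rpow_mul_sinh (q y : ℝ) :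
    exp (q * y) * (cosh y ^ (-q - 1) * sinh y)
      = ((1 + exp (-2 * y)) / 2) ^ (-q - 1) * ((1 - exp (-2 * y)) / 2) := by
  have hcosh : cosh y = exp y * ((1 + exp (-2 * y)) / 2) := by
    rw [cosh_eq, mul_div_assoc', mul_add, ← exp_add]; ring_nf
  have hsinh : sinh y = exp y * ((1 - exp (-2 * y)) / 2) := by
    rw [sinh_eq, mul_div_assoc', mul_sub, ← exp_add]; ring_nf
  rw [hcosh, hsinh, mul_rpow (exp_pos _).le (by positivity), ← exp_mul]
  have : exp (q * y) * exp (y * (-q - 1)) * exp y = 1 := by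
    rw [← exp_add, ← exp_add]; ring_nf; exact exp_zero
  linear_combination (((1 + exp (-2 * y)) / 2) ^ (-q - 1) * ((1 - exp (-2 * y)) / 2)) * this

lemma abs_exp_mul_cosh_rpow_mul_sinh_le {q : ℝ} (hq : 0 ≤ q) (y : ℝ) :
    |exp (q * y) * (cosh y ^ (-q - 1) * sinh y)| ≤ 2 ^ q := by
  set z := exp (-2 * y)
  have hz : 0 < z := exp_pos _
  have hw : 0 < (1 + z) / 2 := by positivity
  rw [exp_mul_cosh_rpow_mul_sinh, abs_mul, abs_of_pos (rpow_pos_of_pos hw _)]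
  calc ((1 + z) / 2) ^ (-q - 1) * |(1 - z) / 2| ≤ ((1 + z) / 2) ^ (-q - 1) * ((1 + z) / 2) := by
        gcongr
        rw [abs_div, abs_two]
        gcongr
        exact abs_le.2 ⟨by linarith, by linarith⟩
    _ = ((1 + z) / 2) ^ (-q) := by rw [← rpow_add_one hw.ne']; ring_nf
    _ ≤ (1 / 2) ^ (-q) := rpow_le_rpow_of_nonpos (by norm_num) (by linarith) (by linarith)
    _ = 2 ^ q := by rw [one_div, inv_rpow zero_le_two, rpow_neg zero_le_two, inv_inv]

lemma tendsto_exp_mul_cosh_rpow_mul_sinh (q : ℝ) :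
    Tendsto (fun y => exp (q * y) * (cosh y ^ (-q - 1) * sinh y)) atTop (𝓝 (2 ^ q)) := by
  simp_rw [exp_mul_cosh_rpow_mul_sinh]
  have hz : Tendsto (fun y : ℝ => exp (-2 * y)) atTop (𝓝 0) :=
    tendsto_exp_atBot.comp (tendsto_id.const_mul_atTop_of_neg (by norm_num))
  have hcont : ContinuousAt (fun z : ℝ => ((1 + z) / 2) ^ (-q - 1) * ((1 - z) / 2)) 0 := by
    fun_prop (disch := norm_num)
  have hlim : ((1 + 0) / 2 : ℝ) ^ (-q - 1) * ((1 - 0) / 2) = 2 ^ q := by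
    rw [add_zero, sub_zero, ← rpow_add_one (by norm_num), sub_add_cancel, one_div,
      inv_rpow zero_le_two, rpow_neg zero_le_two, inv_inv]
  exact hlim ▸ hcont.tendsto.comp hz

section
variable {α q r : ℝ}

lemma integrable_cosh_rpow_neg_mul_exp (hα : 0 < α) (hq : 0 ≤ q) (hqr : q < r) :
    Integrable fun u => cosh (α * u) ^ (-r) * exp (q * α * u) := by
  refine ((integrable_exp_neg_mul_abs (mul_pos (sub_pos.2 hqr) hα)).const_mul (2 ^ r)).mono'
    (by fun_prop) (Eventually.of_forall fun u => ?_)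
  rw [norm_of_nonneg (by positivity)]
  calc cosh (α * u) ^ (-r) * exp (q * α * u)
      ≤ 2 ^ r * exp (-(r * |α * u|)) * exp (q * α * |u|) := by
        gcongr
        · exact cosh_rpow_neg_le (hq.trans hqr.le) _
        · exact le_abs_self u
    _ = 2 ^ r * exp (-((r - q) * α * |u|)) := by
        rw [abs_mul, abs_of_pos hα, mul_assoc, ← exp_add]; ring_nf

lemma integral_cosh_rpow_neg_mul_exp_pos (hα : 0 < α) (hq : 0 ≤ q) (hqr : q < r) :
    0 < ∫ u, cosh (α * u) ^ (-r) * exp (q * α * u) := by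
  refine (integral_pos_iff_support_of_nonneg (fun u => by positivity)
    (integrable_cosh_rpow_neg_mul_exp hα hq hqr)).2 ?_
  rw [Function.support_eq_univ fun u => by positivity]
  simp

lemma tendsto_exp_mul_integral_cosh_rpow_mul_sinh (hα : 0 < α) (hq : 0 ≤ q) (hqr : q < r) :
    Tendsto (fun d => exp (q * α * d) *
        ∫ u, cosh (α * u) ^ (-r) * (cosh (α * (d - u)) ^ (-q - 1) * sinh (α * (d - u))))
      atTop (𝓝 (2 ^ q * ∫ u, cosh (α * u) ^ (-r) * exp (q * α * u))) := by
  set g : ℝ → ℝ := fun u => cosh (α * u) ^ (-r) * exp (q * α * u)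
  set k : ℝ → ℝ := fun y => exp (q * y) * (cosh y ^ (-q - 1) * sinh y)
  have hsplit : ∀ d u, exp (q * α * d) *
      (cosh (α * u) ^ (-r) * (cosh (α * (d - u)) ^ (-q - 1) * sinh (α * (d - u))))
        = g u * k (α * (d - u)) := by
    intro d u
    have : exp (q * α * d) = exp (q * α * u) * exp (q * (α * (d - u))) := by
      rw [← exp_add]; ring_nf
    simp only [g, k, this]; ring
  simp_rw [← integral_const_mul, hsplit]
  refine tendsto_integral_filter_of_dominated_convergence (fun u => 2 ^ q * g u)
    (Eventually.of_forall fun d => by fun_prop) (Eventually.of_forall fun d =>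
      Eventually.of_forall fun u => ?_)
    ((integrable_cosh_rpow_neg_mul_exp hα hq hqr).const_mul _)
    (Eventually.of_forall fun u => ?_)
  · rw [norm_mul, norm_of_nonneg (by positivity : 0 ≤ g u)]
    rw [mul_comm (2 ^ q)]
    exact mul_le_mul_of_nonneg_left (abs_exp_mul_cosh_rpow_mul_sinh_le hq _) (by positivity)
  · rw [mul_comm (2 ^ q)]
    refine tendsto_const_nhds.mul ((tendsto_exp_mul_cosh_rpow_mul_sinh q).comp ?_)
    exact ((tendsto_atTop_add_const_right _ (-u) tendsto_id).const_mul_atTop hα).congr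
      fun d => by simp only [id, sub_eq_add_neg]

lemma exists_integral_cosh_rpow_mul_sinh_bounds (hα : 0 < α) (hq : 0 ≤ q) (hqr : q < r) :
    ∃ c C M : ℝ, 0 < c ∧ 0 < C ∧ 0 < M ∧ ∀ d, M ≤ d →
      c * exp (-(q * α * d))
          ≤ ∫ u, cosh (α * u) ^ (-r) *
              (cosh (α * (d - u)) ^ (-q - 1) * sinh (α * (d - u))) ∧
        ∫ u, cosh (α * u) ^ (-r) * (cosh (α * (d - u)) ^ (-q - 1) * sinh (α * (d - u)))
          ≤ C * exp (-(q * α * d)) := by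
  set L := 2 ^ q * ∫ u, cosh (α * u) ^ (-r) * exp (q * α * u)
  have hL : 0 < L := mul_pos (by positivity) (integral_cosh_rpow_neg_mul_exp_pos hα hq hqr)
  obtain ⟨M, hM⟩ := eventually_atTop.1 <|
    (tendsto_exp_mul_integral_cosh_rpow_mul_sinh hα hq hqr).eventually
      (Icc_mem_nhds (by linarith : L / 2 < L) (by linarith : L < 2 * L))
  refine ⟨L / 2, 2 * L, max M 1, by positivity, by positivity, by positivity, fun d hd => ?_⟩
  obtain ⟨hlow, hup⟩ := hM d (le_of_max_le_left hd)
  set I := ∫ u, cosh (α * u) ^ (-r) * (cosh (α * (d - u)) ^ (-q - 1) * sinh (α * (d - u)))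
  have hI : I = exp (q * α * d) * I * exp (-(q * α * d)) := by
    rw [mul_comm _ I, mul_assoc, ← exp_add, add_neg_cancel, exp_zero, mul_one]
  rw [hI]
  exact ⟨mul_le_mul_of_nonneg_right hlow (exp_pos _).le,
    mul_le_mul_of_nonneg_right hup (exp_pos _).le⟩

end

lemma hasDerivAt_cosh_mul_sub_rpow_neg (q α t s : ℝ) :
    HasDerivAt (fun s => cosh (α * (s - t)) ^ (-q))
      (q * α * (cosh (α * (t - s)) ^ (-q - 1) * sinh (α * (t - s)))) s := by
  have hcosh : HasDerivAt (fun s => cosh (α * (s - t))) (sinh (α * (s - t)) * α) s := by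
    simpa using (((hasDerivAt_id s).sub_const t).const_mul α).cosh
  convert hcosh.rpow_const (p := -q) (Or.inl (cosh_pos _).ne') using 1
  rw [show α * (t - s) = -(α * (s - t)) by ring, cosh_neg, sinh_neg]
  ring

lemma integral_rpow_mul_deriv_of_cosh_rpow_neg {α β q p : ℝ} (hβ : 0 ≤ β)
    (t₁ t₂ : ℝ) :
    ∫ s, (β * cosh (α * (s - t₁)) ^ (-q)) ^ (p - 1) *
        deriv (fun s => β * cosh (α * (s - t₂)) ^ (-q)) s
      = β ^ (p - 1) * (β * (q * α)) * ∫ u, cosh (α * u) ^ (-(q * (p - 1))) *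
        (cosh (α * (t₂ - t₁ - u)) ^ (-q - 1) * sinh (α * (t₂ - t₁ - u))) := by
  have hintegrand : ∀ s, (β * cosh (α * (s - t₁)) ^ (-q)) ^ (p - 1) *
      deriv (fun s => β * cosh (α * (s - t₂)) ^ (-q)) s
        = β ^ (p - 1) * (β * (q * α)) * (cosh (α * (s - t₁)) ^ (-(q * (p - 1))) *
          (cosh (α * (t₂ - t₁ - (s - t₁))) ^ (-q - 1) *
            sinh (α * (t₂ - t₁ - (s - t₁))))) := by
    intro s
    rw [((hasDerivAt_cosh_mul_sub_rpow_neg q α t₂ s).const_mul β).deriv,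
      mul_rpow hβ (by positivity), ← rpow_mul (cosh_pos _).le]
    ring_nf
  simp_rw [hintegrand]
  rw [integral_const_mul, integral_sub_right_eq_self (fun u => cosh (α * u) ^ (-(q * (p - 1))) *
    (cosh (α * (t₂ - t₁ - u)) ^ (-q - 1) * sinh (α * (t₂ - t₁ - u)))) t₁]

/-- Lemma 2.6: there are constants `c, C, M > 0`, depending only on `p` and `Λ`,
such that whenever `t₂ - t₁ ≥ M`,
`∫ V_{t₁}^{p-1} V_{t₂}' ≈ e^{√Λ (t₁ - t₂)}`. -/
theorem stmt_9 (p Λ α β : ℝ) (hp : 2 < p) (hΛ : 0 < Λ)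
    (hα : α = (p - 2) / 2 * Real.sqrt Λ) (hβ : β = (p * Λ / 2) ^ ((1 : ℝ) / (p - 2)))
    (V : ℝ → ℝ → ℝ)
    (hV : ∀ t s, V t s = β * Real.cosh (α * (s - t)) ^ (-2 / (p - 2) : ℝ)) :
    ∃ c C M : ℝ, 0 < c ∧ 0 < C ∧ 0 < M ∧
      ∀ t₁ t₂ : ℝ, M ≤ t₂ - t₁ →
        c * Real.exp (Real.sqrt Λ * (t₁ - t₂))
          ≤ (∫ s : ℝ, V t₁ s ^ (p - 1) * deriv (V t₂) s) ∧
        (∫ s : ℝ, V t₁ s ^ (p - 1) * deriv (V t₂) s)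
          ≤ C * Real.exp (Real.sqrt Λ * (t₁ - t₂)) := by
  have hp2 : 0 < p - 2 := by linarith
  set q := 2 / (p - 2)
  have hq : 0 < q := by positivity
  have hα0 : 0 < α := by rw [hα]; positivity
  have hβ0 : 0 < β := by rw [hβ]; positivity
  have hqα : q * α = √Λ := by
    rw [hα, ← mul_assoc, div_mul_div_comm, mul_comm 2, div_self (by positivity), one_mul]
  have hVq : ∀ t, V t = fun s => β * cosh (α * (s - t)) ^ (-q) := fun t => by
    funext s; rw [hV, neg_div]
  set A := β ^ (p - 1) * (β * (q * α))
  have hA : 0 < A := by positivity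
  obtain ⟨c, C, M, hc, hC, hM, hbounds⟩ :=
    exists_integral_cosh_rpow_mul_sinh_bounds hα0 hq.le (lt_mul_right hq (by linarith : 1 < p - 1))
  refine ⟨A * c, A * C, M, by positivity, by positivity, hM, fun t₁ t₂ hd => ?_⟩
  obtain ⟨hlow, hup⟩ := hbounds _ hd
  simp only [hVq]
  rw [integral_rpow_mul_deriv_of_cosh_rpow_neg hβ0.le, mul_assoc A, mul_assoc A,
    show √Λ * (t₁ - t₂) = -(q * α * (t₂ - t₁)) by rw [hqα]; ring]
  exact ⟨mul_le_mul_of_nonneg_left hlow hA.le, mul_le_mul_of_nonneg_left hup hA.le⟩
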